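/- arXiv:math/0110129 — 2 statements merged into one kernel-verified Lean document; each statement's English description precedes it below -/
import Mathlib

section
/- Fix integers n ≥ 1 and g ≥ 1. Let M(n,g) be the presented group with generators σ_1,…,σ_{n−1}, b_1,…,b_{2g} and relations: the braid relations; b_rσ_i = σ_ib_r for all r and i ≠ 1; b_sσ_1⁻¹b_rσ_1⁻¹ = σ_1b_rσ_1⁻¹b_s for 1 ≤ s < r ≤ 2g; b_rσ_1⁻¹b_rσ_1⁻¹ = σ_1⁻¹b_rσ_1⁻¹b_r for all r; and b_1b_2⁻¹b_3b_4⁻¹⋯b_{2g−1}b_{2g}⁻¹·b_1⁻¹b_2b_3⁻¹b_4⋯b_{2g−1}⁻¹b_{2g} = Δ. Let GM(n,g) be the presented group with generators σ_1,…,σ_{n−1}, a_1,…,a_{2g} and relations: the braid relations; [a_r, A_{2,s}] = 1 for 1 ≤ r,s ≤ 2g with r ≠ s; [a_r, σ_i] = 1 for i ≠ 1; [a_1⋯a_r, A_{2,r}] = σ_1² for 1 ≤ r ≤ 2g; and a_1⋯a_{2g}a_1⁻¹⋯a_{2g}⁻¹ = Δ, where A_{2,r} := σ_1⁻¹(a_1⋯a_{r−1}a_{r+1}⁻¹⋯a_{2g}⁻¹)σ_1⁻¹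 and [x,y] := xyx⁻¹y⁻¹. Then there exists a group homomorphism from GM(n,g) to M(n,g) sending (the class of) σ_i to σ_i for all 1 ≤ i ≤ n−1, and sending a_j to b_j for odd j and a_j to b_j⁻¹ for even j (1 ≤ j ≤ 2g). -/
/-- Generators: `Sum.inl i` is `σ_{i+1}`; `Sum.inr j` is the surface generator with
(1-based) index `j + 1`. -/
abbrev Gens (n g : ℕ) : Type := Fin (n - 1) ⊕ Fin (2 * g)

/-- `σ_{i+1}` as an element of the free group. -/
def sg {n g : ℕ} (i : Fin (n - 1)) : FreeGroup (Gens n g) := FreeGroup.of (Sum.inl i)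

/-- The surface generator with 1-based index `j + 1` (`b_{j+1}` for `M`, `a_{j+1}` for
`GM`). -/
def ug {n g : ℕ} (j : Fin (2 * g)) : FreeGroup (Gens n g) := FreeGroup.of (Sum.inr j)

/-- The full-twist word `Δ = σ_1 σ_2 ⋯ σ_{n-2} σ_{n-1}² σ_{n-2} ⋯ σ_2 σ_1`, written as
`(σ_1 ⋯ σ_{n-1}) * (σ_{n-1} ⋯ σ_1)`. -/
def deltaWord (n g : ℕ) : FreeGroup (Gens n g) :=
  (List.ofFn fun i : Fin (n - 1) => sg i).prod *
    ((List.ofFn fun i : Fin (n - 1) => sg i).reverse).prod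

/-- The braid relators. -/
def braidRels (n g : ℕ) : Set (FreeGroup (Gens n g)) :=
  {r | (∃ i j : Fin (n - 1), (i : ℕ) + 1 = (j : ℕ) ∧
        r = sg i * sg j * sg i * (sg j * sg i * sg j)⁻¹)
    ∨ (∃ i j : Fin (n - 1), ((i : ℕ) + 2 ≤ (j : ℕ) ∨ (j : ℕ) + 2 ≤ (i : ℕ)) ∧
        r = sg i * sg j * (sg j * sg i)⁻¹)}

/-- The word `b_1 b_2⁻¹ b_3 b_4⁻¹ ⋯ b_{2g-1} b_{2g}⁻¹`: the exponent of `b_{j+1}` is `+1`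
for even `j : Fin (2g)` (odd 1-based index) and `-1` otherwise. -/
def trLeft (n g : ℕ) : FreeGroup (Gens n g) :=
  (List.ofFn fun j : Fin (2 * g) =>
    if (j : ℕ) % 2 = 0 then ug j else (ug j)⁻¹).prod

/-- The word `b_1⁻¹ b_2 b_3⁻¹ b_4 ⋯ b_{2g-1}⁻¹ b_{2g}`. -/
def trRight (n g : ℕ) : FreeGroup (Gens n g) :=
  (List.ofFn fun j : Fin (2 * g) =>
    if (j : ℕ) % 2 = 0 then (ug j)⁻¹ else ug j).prod

/-- The relators of the presentation `M(n, g)` (Theorem 5.4), with `ug j = b_{j+1}`.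
Relations involving `σ_1` are guarded by `0 < n - 1`, i.e. by `n > 1`. -/
def mRels (n g : ℕ) : Set (FreeGroup (Gens n g)) :=
  braidRels n g ∪
  {r | -- b_r σ_i = σ_i b_r  (i ≠ 1)
      (∃ (i : Fin (n - 1)) (c : Fin (2 * g)), (i : ℕ) ≠ 0 ∧
        r = ug c * sg i * (sg i * ug c)⁻¹)
    -- b_s σ_1⁻¹ b_r σ_1⁻¹ = σ_1 b_r σ_1⁻¹ b_s  (s < r)
    ∨ (∃ (h : 0 < n - 1) (s c : Fin (2 * g)), (s : ℕ) < (c : ℕ) ∧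
        r = ug s * (sg ⟨0, h⟩)⁻¹ * ug c * (sg ⟨0, h⟩)⁻¹ *
          (sg ⟨0, h⟩ * ug c * (sg ⟨0, h⟩)⁻¹ * ug s)⁻¹)
    -- b_r σ_1⁻¹ b_r σ_1⁻¹ = σ_1⁻¹ b_r σ_1⁻¹ b_r
    ∨ (∃ (h : 0 < n - 1) (c : Fin (2 * g)),
        r = ug c * (sg ⟨0, h⟩)⁻¹ * ug c * (sg ⟨0, h⟩)⁻¹ *
          ((sg ⟨0, h⟩)⁻¹ * ug c * (sg ⟨0, h⟩)⁻¹ * ug c)⁻¹)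
    -- TR
    ∨ r = trLeft n g * trRight n g * (deltaWord n g)⁻¹}

/-- The word `A_{2,r} = σ_1⁻¹ (a_1 ⋯ a_{r-1} a_{r+1}⁻¹ ⋯ a_{2g}⁻¹) σ_1⁻¹` of
Gonzàlez-Meneses' presentation, with `ug j = a_{j+1}`. -/
def aWord (n g : ℕ) (h : 0 < n - 1) (c : Fin (2 * g)) : FreeGroup (Gens n g) :=
  (sg ⟨0, h⟩)⁻¹ *
    (List.ofFn fun t : Fin (2 * g) =>
      if (t : ℕ) < (c : ℕ) then ug t else if (t : ℕ) = (c : ℕ) then 1 else (ug t)⁻¹).prod *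
    (sg ⟨0, h⟩)⁻¹

/-- The prefix word `a_1 a_2 ⋯ a_{r}` (here `c` is the 0-based index of `a_r`). -/
def prefixWord (n g : ℕ) (c : Fin (2 * g)) : FreeGroup (Gens n g) :=
  (List.ofFn fun t : Fin (2 * g) => if (t : ℕ) ≤ (c : ℕ) then ug t else 1).prod

/-- The relators of Gonzàlez-Meneses' presentation `GM(n, g)`, with `ug j = a_{j+1}`.
Relations involving `σ_1` are guarded by `0 < n - 1`, i.e. by `n > 1`. -/
def gmRels (n g : ℕ) : Set (FreeGroup (Gens n g)) :=
  braidRels n g ∪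
  {r | -- [a_r, A_{2,s}] = 1  (r ≠ s)
      (∃ (h : 0 < n - 1) (c s : Fin (2 * g)), c ≠ s ∧
        r = ug c * aWord n g h s * (ug c)⁻¹ * (aWord n g h s)⁻¹)
    -- [a_r, σ_i] = 1  (i ≠ 1)
    ∨ (∃ (c : Fin (2 * g)) (i : Fin (n - 1)), (i : ℕ) ≠ 0 ∧
        r = ug c * sg i * (ug c)⁻¹ * (sg i)⁻¹)
    -- [a_1 ⋯ a_r, A_{2,r}] = σ_1²
    ∨ (∃ (h : 0 < n - 1) (c : Fin (2 * g)),
        r = prefixWord n g c * aWord n g h c * (prefixWord n g c)⁻¹ * (aWord n g h c)⁻¹ *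
          ((sg ⟨0, h⟩) ^ 2)⁻¹)
    -- a_1 ⋯ a_{2g} a_1⁻¹ ⋯ a_{2g}⁻¹ = Δ
    ∨ r = (List.ofFn fun t : Fin (2 * g) => ug t).prod *
        (List.ofFn fun t : Fin (2 * g) => (ug t)⁻¹).prod * (deltaWord n g)⁻¹}


/-!
The substitution `σ_i ↦ σ_i`, `a_j ↦ b_j^{±1}` of words has to kill every relator of `GM(n, g)`
in `M(n, g)`. Braid relators are unchanged and the total relator becomes exactly the relator
`TR` of `M(n, g)`, so the work lies in the two relations involving
`A_{2,s} = x⁻¹ W_s x⁻¹`, where `x = σ₁` and `W_s = e_1 ⋯ e_{s-1} e_{s+1}⁻¹ ⋯ e_{2g}⁻¹` with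
`e_t = b_t^{±1}` the image of `a_t`.

Follow the conjugates of `x b_c x⁻¹` along the letters of `W_s`. By the mixed relation
`b_s σ₁⁻¹ b_r σ₁⁻¹ = σ₁ b_r σ₁⁻¹ b_s`, a letter `e_t` with `t < c` moves it between the
`2`-periodic states `x^{±1} b_c x⁻¹`, a letter with `t > c` between the states
`x⁻¹ b_c x^{∓1}`, and by `b_r σ₁⁻¹ b_r σ₁⁻¹ = σ₁⁻¹ b_r σ₁⁻¹ b_r` the letter `e_c` passes from
one family to the other. As `2g` is even, `W_s` conjugates `x b_c x⁻¹` to `x⁻¹ b_c x` whenever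
`c ≠ s`, which says that `e_c` commutes with `A_{2,s}`. For `s = c` the same bookkeeping gives
`e_c A_{2,c} e_c⁻¹ = x⁻¹ Q x² S x⁻¹`, where `W_c = Q S`, and shows that `Q x⁻¹ Q` commutes with
`x`; together these give `[e_1 ⋯ e_c, A_{2,c}] = x²`.
-/

namespace SurfaceBraid

variable {G : Type*} [Group G]

def icoProd (w : ℕ → G) (i j : ℕ) : G := ((List.Ico i j).map w).prod

theorem icoProd_mul_icoProd (w : ℕ → G) {i j k : ℕ} (hij : i ≤ j) (hjk : j ≤ k) :
    icoProd w i j * icoProd w j k = icoProd w i k := by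
  simp only [icoProd, ← List.prod_append, ← List.map_append, List.Ico.append_consecutive hij hjk]

theorem icoProd_succ (w : ℕ → G) {i j : ℕ} (hij : i ≤ j) :
    icoProd w i (j + 1) = icoProd w i j * w j := by
  simp [icoProd, List.Ico.succ_top hij]

theorem icoProd_eq_mul (w : ℕ → G) {i j : ℕ} (hij : i < j) :
    icoProd w i j = w i * icoProd w (i + 1) j := by
  simp [icoProd, List.Ico.eq_cons hij]

theorem icoProd_congr {w w' : ℕ → G} {i j : ℕ} (h : ∀ t, i ≤ t → t < j → w t = w' t) :
    icoProd w i j = icoProd w' i j := by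
  unfold icoProd
  congr 1
  exact List.map_congr_left fun t ht => h t (List.Ico.mem.1 ht).1 (List.Ico.mem.1 ht).2

theorem ofFn_prod_eq_icoProd {M : ℕ} {f : Fin M → G} {v : ℕ → G} (h : ∀ t : Fin M, f t = v t) :
    (List.ofFn f).prod = icoProd v 0 M := by
  rw [icoProd, List.Ico.zero_bot, ← List.map_coe_finRange_eq_range, List.map_map, List.ofFn_eq_map]
  exact congrArg _ (List.map_congr_left fun t _ => h t)

theorem semiconjBy_icoProd {w X : ℕ → G} {i j : ℕ} (hij : i ≤ j)
    (hw : ∀ t, i ≤ t → t < j → SemiconjBy (w t) (X (t + 1)) (X t)) :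
    SemiconjBy (icoProd w i j) (X j) (X i) := by
  induction j, hij using Nat.le_induction with
  | base => simp [icoProd]
  | succ j hij ih =>
    rw [icoProd_succ w hij]
    exact (ih fun t h₁ h₂ => hw t h₁ (by omega)).mul_left (hw j hij (by omega))

-- Read backwards, a chain of `2`-periodic states is the same chain shifted by one.
theorem semiconjBy_icoProd_inv {w X : ℕ → G} {i j : ℕ} (hij : i < j)
    (hX : ∀ t, X (t + 2) = X t)
    (hw : ∀ t, i < t → t < j → SemiconjBy (w t) (X (t + 1)) (X t)) :
    SemiconjBy (icoProd (fun t => (w t)⁻¹) (i + 1) j) (X (j + 1)) (X i) := by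
  have h := semiconjBy_icoProd (w := fun t => (w t)⁻¹) (X := fun t => X (t + 1)) hij
    fun t h₁ h₂ => by simpa only [Nat.add_assoc, hX] using (hw t h₁ h₂).inv_symm_left
  simpa only [Nat.add_assoc, hX] using h

theorem commute_icoProd {w : ℕ → G} {y : G} {i j : ℕ} (hij : i ≤ j)
    (hw : ∀ t, i ≤ t → t < j → Commute (w t) y) : Commute (icoProd w i j) y :=
  semiconjBy_icoProd (X := fun _ => y) hij hw

theorem semiconjBy_conj_swap {a x y : G} (h : SemiconjBy a (x⁻¹ * y * x⁻¹) (x * y * x⁻¹)) :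
    SemiconjBy y (x⁻¹ * a * x) (x⁻¹ * a * x⁻¹) := by
  unfold SemiconjBy at *
  calc y * (x⁻¹ * a * x) = x⁻¹ * (x * y * x⁻¹ * a) * x := by group
    _ = x⁻¹ * (a * (x⁻¹ * y * x⁻¹)) * x := by rw [h]
    _ = x⁻¹ * a * x⁻¹ * y := by group

theorem commute_conj_of_semiconjBy {w x y : G} (h : SemiconjBy w (x⁻¹ * y * x) (x * y * x⁻¹)) :
    Commute y (x⁻¹ * w * x⁻¹) := by
  unfold Commute SemiconjBy at *
  calc y * (x⁻¹ * w * x⁻¹) = x⁻¹ * (x * y * x⁻¹ * w) * x⁻¹ := by group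
    _ = x⁻¹ * (w * (x⁻¹ * y * x)) * x⁻¹ := by rw [h]
    _ = x⁻¹ * w * x⁻¹ * y := by group

theorem commute_mul_inv_mul_of_semiconjBy {q e y x : G} (hq : Commute (q * x⁻¹ * q) x)
    (he : Commute (e * y * e) x) (h : SemiconjBy q (x * e * y) (x * e * x⁻¹)) :
    Commute (q * e * x⁻¹ * (q * e)) x := by
  have key : q * e * x⁻¹ * (q * e) = q * x⁻¹ * q * x * (e * y * e) := by
    unfold SemiconjBy at h
    calc q * e * x⁻¹ * (q * e) = q * x⁻¹ * (x * e * x⁻¹ * q) * e := by group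
      _ = q * x⁻¹ * (q * (x * e * y)) * e := by rw [h]
      _ = q * x⁻¹ * q * x * (e * y * e) := by group
  rw [key]
  exact (hq.mul_left (Commute.refl x)).mul_left he

/-- The relations of `M(n, g)` between `x = σ₁` and `b t = b_{t+1}`, `t < m`. -/
structure SurfaceRelations (x : G) (b : ℕ → G) (m : ℕ) : Prop where
  semiconj : ∀ s c, s < c → c < m → SemiconjBy (b s) (x⁻¹ * b c * x⁻¹) (x * b c * x⁻¹)
  commute : ∀ c, c < m → Commute (b c) (x⁻¹ * b c * x⁻¹)

/-- The image `b_{t+1}^{±1}` of the generator `a_{t+1}` of `GM(n, g)`. -/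
def alt (b : ℕ → G) (t : ℕ) : G := if Even t then b t else (b t)⁻¹

theorem commute_alt_of_commute {b : ℕ → G} {y : G} {t : ℕ} (h : Commute (b t) y) :
    Commute (alt b t) y := by
  unfold alt
  split_ifs
  exacts [h, h.inv_left]

def twist (x : G) (t : ℕ) : G := if Even t then x else x⁻¹

def skipWord (b : ℕ → G) (m s : ℕ) : G :=
  icoProd (alt b) 0 s * icoProd (fun t => (alt b t)⁻¹) (s + 1) m

@[simp] theorem twist_add_two (x : G) (t : ℕ) : twist x (t + 2) = twist x t := by
  simp [twist, Nat.even_add]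

theorem icoProd_ite_eq_skipWord (b : ℕ → G) {m s : ℕ} (hs : s < m) :
    icoProd (fun t => if t < s then alt b t else if t = s then 1 else (alt b t)⁻¹) 0 m =
      skipWord b m s := by
  rw [← icoProd_mul_icoProd _ (Nat.zero_le s) hs.le, icoProd_eq_mul _ hs, skipWord]
  simp only [lt_irrefl, if_false, if_true, one_mul]
  congr 1 <;> apply icoProd_congr <;> intro t h₁ h₂
  · simp [h₂]
  · simp [show ¬t < s by omega, show t ≠ s by omega]

theorem icoProd_ite_le_eq_icoProd (b : ℕ → G) {m c : ℕ} (hc : c < m) :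
    icoProd (fun t => if t ≤ c then alt b t else 1) 0 m = icoProd (alt b) 0 (c + 1) := by
  rw [← icoProd_mul_icoProd _ (Nat.zero_le (c + 1)) hc, icoProd_congr (j := m) (w' := fun _ => 1)
    fun t h₁ _ => if_neg (by omega), icoProd_congr fun t _ h₂ => if_pos (by omega)]
  simp [icoProd]

namespace SurfaceRelations

variable {x : G} {b : ℕ → G} {m : ℕ} (hR : SurfaceRelations x b m)
include hR

theorem semiconjBy_self_conj {c : ℕ} (hc : c < m) :
    SemiconjBy (b c) (x⁻¹ * b c * x) (x * b c * x⁻¹) := by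
  have h := (hR.commute c hc).eq
  unfold SemiconjBy
  calc b c * (x⁻¹ * b c * x) = x * (x⁻¹ * b c * x⁻¹ * b c) * x := by group
    _ = x * (b c * (x⁻¹ * b c * x⁻¹)) * x := by rw [h]
    _ = x * b c * x⁻¹ * b c := by group

theorem semiconjBy_alt_of_lt {t c : ℕ} (htc : t < c) (hc : c < m) :
    SemiconjBy (alt b t) (twist x (t + 1) * b c * x⁻¹) (twist x t * b c * x⁻¹) := by
  by_cases ht : Even t
  · simpa [alt, twist, ht, Nat.even_add_one] using hR.semiconj t c htc hc
  · simpa [alt, twist, ht, Nat.even_add_one] using (hR.semiconj t c htc hc).inv_symm_left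

theorem semiconjBy_alt_of_gt {t c : ℕ} (hct : c < t) (ht : t < m) :
    SemiconjBy (alt b t) (x⁻¹ * b c * (twist x (t + 1))⁻¹) (x⁻¹ * b c * (twist x t)⁻¹) := by
  have h := semiconjBy_conj_swap (hR.semiconj c t hct ht)
  by_cases ht : Even t
  · simpa [alt, twist, ht, Nat.even_add_one] using h
  · simpa [alt, twist, ht, Nat.even_add_one] using h.inv_symm_left

theorem semiconjBy_alt_diag {c : ℕ} (hc : c < m) :
    SemiconjBy (alt b c) (x⁻¹ * b c * (twist x (c + 1))⁻¹) (twist x c * b c * x⁻¹) := by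
  by_cases h : Even c
  · simpa [alt, twist, h, Nat.even_add_one] using hR.semiconjBy_self_conj hc
  · simpa [alt, twist, h, Nat.even_add_one] using (hR.commute c hc).inv_left.semiconjBy

theorem semiconjBy_alt_inv_diag {c : ℕ} (hc : c < m) :
    SemiconjBy (alt b c)⁻¹ (x⁻¹ * b c * (twist x c)⁻¹) (twist x (c + 1) * b c * x⁻¹) := by
  by_cases h : Even c
  · simpa [alt, twist, h, Nat.even_add_one] using (hR.commute c hc).inv_left.semiconjBy
  · simpa [alt, twist, h, Nat.even_add_one] using hR.semiconjBy_self_conj hc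

theorem semiconjBy_icoProd_alt {k c : ℕ} (hkc : k ≤ c) (hc : c < m) :
    SemiconjBy (icoProd (alt b) 0 k) (twist x k * b c * x⁻¹) (x * b c * x⁻¹) := by
  simpa [twist] using semiconjBy_icoProd (w := alt b) (X := fun t => twist x t * b c * x⁻¹)
    (Nat.zero_le k) fun t _ ht => hR.semiconjBy_alt_of_lt (by omega) hc

theorem semiconjBy_icoProd_alt_inv (hm : Even m) {c s : ℕ} (hcs : c ≤ s) (hs : s < m) :
    SemiconjBy (icoProd (fun t => (alt b t)⁻¹) (s + 1) m) (x⁻¹ * b c * x)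
      (x⁻¹ * b c * (twist x s)⁻¹) := by
  have h := semiconjBy_icoProd_inv (w := alt b) (X := fun t => x⁻¹ * b c * (twist x t)⁻¹) hs
    (by simp) fun t h₁ h₂ => hR.semiconjBy_alt_of_gt (by omega) h₂
  simpa [twist, Nat.even_add_one, hm] using h

theorem semiconjBy_skipWord (hm : Even m) {s c : ℕ} (hs : s < m) (hc : c < m) (hcs : c ≠ s) :
    SemiconjBy (skipWord b m s) (x⁻¹ * b c * x) (x * b c * x⁻¹) := by
  rcases Nat.lt_or_gt_of_ne hcs with hcs | hsc
  · have hmid := semiconjBy_icoProd (w := alt b) (X := fun t => x⁻¹ * b c * (twist x t)⁻¹)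
      (show c + 1 ≤ s by omega) fun t h₁ h₂ => hR.semiconjBy_alt_of_gt h₁ (by omega)
    have := ((hR.semiconjBy_icoProd_alt le_rfl hc).mul_left
      ((hR.semiconjBy_alt_diag hc).mul_left hmid)).mul_left
        (hR.semiconjBy_icoProd_alt_inv hm hcs.le hs)
    rw [← icoProd_eq_mul _ hcs, icoProd_mul_icoProd _ (Nat.zero_le c) hcs.le] at this
    simpa [skipWord] using this
  · have hmid := semiconjBy_icoProd_inv (w := alt b) (X := fun t => twist x t * b c * x⁻¹)
      hsc (by simp) fun t h₁ h₂ => hR.semiconjBy_alt_of_lt h₂ hc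
    have := (hR.semiconjBy_icoProd_alt hsc.le hc).mul_left (hmid.mul_left
      ((hR.semiconjBy_alt_inv_diag hc).mul_left (hR.semiconjBy_icoProd_alt_inv hm le_rfl hc)))
    rw [← icoProd_eq_mul (fun t => (alt b t)⁻¹) hc,
      icoProd_mul_icoProd _ (show s + 1 ≤ c by omega) hc.le] at this
    simpa [skipWord] using this

theorem commute_alt_skipWord_conj (hm : Even m) {s c : ℕ} (hs : s < m) (hc : c < m)
    (hcs : c ≠ s) : Commute (alt b c) (x⁻¹ * skipWord b m s * x⁻¹) :=
  commute_alt_of_commute (commute_conj_of_semiconjBy (hR.semiconjBy_skipWord hm hs hc hcs))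

theorem alt_mul_skipWord_conj_mul_alt_inv (hm : Even m) {c : ℕ} (hc : c < m) :
    alt b c * (x⁻¹ * skipWord b m c * x⁻¹) * (alt b c)⁻¹ =
      x⁻¹ * icoProd (alt b) 0 c * x ^ 2 * icoProd (fun t => (alt b t)⁻¹) (c + 1) m * x⁻¹ := by
  have hq := (hR.semiconjBy_icoProd_alt le_rfl hc).eq
  have hr := (hR.semiconjBy_icoProd_alt_inv hm le_rfl hc).eq
  unfold skipWord
  generalize icoProd (alt b) 0 c = q at hq ⊢
  generalize icoProd (fun t => (alt b t)⁻¹) (c + 1) m = r at hr ⊢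
  by_cases h : Even c
  · simp only [alt, twist, h, if_true] at hq hr ⊢
    calc b c * (x⁻¹ * (q * r) * x⁻¹) * (b c)⁻¹
        = x⁻¹ * (x * b c * x⁻¹ * q) * r * x⁻¹ * (b c)⁻¹ := by group
      _ = x⁻¹ * q * x ^ 2 * (x⁻¹ * b c * x⁻¹ * r) * x⁻¹ * (b c)⁻¹ := by rw [← hq]; group
      _ = x⁻¹ * q * x ^ 2 * r * x⁻¹ := by rw [← hr]; group
  · simp only [alt, twist, h, if_false, inv_inv] at hq hr ⊢
    calc (b c)⁻¹ * (x⁻¹ * (q * r) * x⁻¹) * b c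
        = (b c)⁻¹ * x⁻¹ * q * (r * (x⁻¹ * b c * x)) * x⁻¹ := by group
      _ = (b c)⁻¹ * x⁻¹ * (q * (x⁻¹ * b c * x⁻¹)) * x ^ 2 * r * x⁻¹ := by rw [hr]; group
      _ = x⁻¹ * q * x ^ 2 * r * x⁻¹ := by rw [hq]; group

theorem commute_alt_mul_twist_inv_mul_alt {c : ℕ} (hc : c < m) :
    Commute (alt b c * (twist x c)⁻¹ * alt b c) x := by
  have h : Commute (b c * x⁻¹ * b c) x⁻¹ := by
    have := (hR.commute c hc).eq
    unfold Commute SemiconjBy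
    calc b c * x⁻¹ * b c * x⁻¹ = b c * (x⁻¹ * b c * x⁻¹) := by group
      _ = x⁻¹ * (b c * x⁻¹ * b c) := by rw [this]; group
  by_cases hc' : Even c
  · simpa [alt, twist, hc'] using h.inv_right
  · simpa [alt, twist, hc', mul_assoc] using h.inv_left.inv_right

theorem commute_icoProd_mul_inv_mul_icoProd {k : ℕ} (hk : k ≤ m) :
    Commute (icoProd (alt b) 0 k * x⁻¹ * icoProd (alt b) 0 k) x := by
  induction k with
  | zero => simp [icoProd]
  | succ k ih =>
    have hq := hR.semiconjBy_icoProd_alt le_rfl (show k < m by omega)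
    rw [icoProd_succ _ (Nat.zero_le k)]
    refine commute_mul_inv_mul_of_semiconjBy (ih (by omega))
      (hR.commute_alt_mul_twist_inv_mul_alt (show k < m by omega)) ?_
    by_cases h : Even k
    · simpa [alt, twist, h] using hq
    · simpa [alt, twist, h, mul_assoc] using hq.inv_right

theorem commutator_icoProd_skipWord_conj (hm : Even m) {c : ℕ} (hc : c < m) :
    icoProd (alt b) 0 (c + 1) * (x⁻¹ * skipWord b m c * x⁻¹) * (icoProd (alt b) 0 (c + 1))⁻¹ *
      (x⁻¹ * skipWord b m c * x⁻¹)⁻¹ = x ^ 2 := by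
  have hqa : Commute (icoProd (alt b) 0 c) (x⁻¹ * skipWord b m c * x⁻¹) :=
    commute_icoProd (Nat.zero_le c) fun t _ ht =>
      hR.commute_alt_skipWord_conj hm hc (ht.trans hc) ht.ne
  have hconj := hR.alt_mul_skipWord_conj_mul_alt_inv hm hc
  have hx := ((hR.commute_icoProd_mul_inv_mul_icoProd hc.le).pow_right 2).eq
  rw [icoProd_succ _ (Nat.zero_le c)]
  unfold skipWord at *
  generalize icoProd (alt b) 0 c = q at *
  generalize icoProd (fun t => (alt b t)⁻¹) (c + 1) m = r at *
  calc q * alt b c * (x⁻¹ * (q * r) * x⁻¹) * (q * alt b c)⁻¹ * (x⁻¹ * (q * r) * x⁻¹)⁻¹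
      = q * (alt b c * (x⁻¹ * (q * r) * x⁻¹) * (alt b c)⁻¹) * (x⁻¹ * (q * r) * x⁻¹ * q)⁻¹ := by
        group
    _ = q * x⁻¹ * q * x ^ 2 * (q * x⁻¹ * q)⁻¹ := by rw [hconj, ← hqa.eq]; group
    _ = x ^ 2 := by rw [hx]; group

end SurfaceRelations

section Map

variable {H : Type*} [Group H]

theorem map_icoProd (f : G →* H) (w : ℕ → G) (i j : ℕ) :
    f (icoProd w i j) = icoProd (f ∘ w) i j := by
  simp [icoProd, map_list_prod, List.map_map]

theorem map_alt (f : G →* H) (b : ℕ → G) (t : ℕ) : f (alt b t) = alt (f ∘ b) t := by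
  unfold alt; split_ifs <;> simp

theorem comp_alt (f : G →* H) (b : ℕ → G) : f ∘ alt b = alt (f ∘ b) :=
  funext (map_alt f b)

theorem map_skipWord (f : G →* H) (b : ℕ → G) (m s : ℕ) :
    f (skipWord b m s) = skipWord (f ∘ b) m s := by
  rw [skipWord, skipWord, map_mul, map_icoProd, map_icoProd, comp_alt]
  congr 2
  funext t
  simp [map_alt]

end Map

section Presentation

variable {n g : ℕ}

-- Extended by `1` beyond `2g`, so that words in the `b_j` can be indexed by `ℕ`.
def ugExt (n g t : ℕ) : FreeGroup (Gens n g) := if h : t < 2 * g then ug ⟨t, h⟩ else 1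

theorem ugExt_coe (j : Fin (2 * g)) : ugExt n g j = ug j := by simp [ugExt]

def substitution (n g : ℕ) : FreeGroup (Gens n g) →* FreeGroup (Gens n g) :=
  FreeGroup.lift (Sum.elim sg fun j => if (j : ℕ) % 2 = 0 then ug j else (ug j)⁻¹)

theorem substitution_sg (i : Fin (n - 1)) : substitution n g (sg i) = sg i := by
  simp [substitution, sg]

theorem substitution_ug (j : Fin (2 * g)) : substitution n g (ug j) = alt (ugExt n g) j := by
  simp [substitution, ug, alt, ugExt_coe, Nat.even_iff]

theorem substitution_deltaWord : substitution n g (deltaWord n g) = deltaWord n g := by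
  simp [deltaWord, map_list_prod, List.map_ofFn, Function.comp_def, substitution_sg,
    List.map_reverse]

theorem substitution_of_mem_braidRels {r : FreeGroup (Gens n g)} (hr : r ∈ braidRels n g) :
    substitution n g r = r := by
  rcases hr with ⟨i, j, -, rfl⟩ | ⟨i, j, -, rfl⟩ <;> simp [substitution_sg]

theorem substitution_aWord (h : 0 < n - 1) (c : Fin (2 * g)) :
    substitution n g (aWord n g h c) =
      (sg ⟨0, h⟩)⁻¹ * skipWord (ugExt n g) (2 * g) c * (sg ⟨0, h⟩)⁻¹ := by
  rw [aWord, map_mul, map_mul, map_inv, substitution_sg, map_list_prod, List.map_ofFn,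
    ← icoProd_ite_eq_skipWord _ c.isLt, ofFn_prod_eq_icoProd]
  intro t
  simp only [Function.comp_apply, Fin.val_inj]
  split_ifs <;> simp [substitution_ug]

theorem substitution_prefixWord (c : Fin (2 * g)) :
    substitution n g (prefixWord n g c) = icoProd (alt (ugExt n g)) 0 (c + 1) := by
  rw [prefixWord, map_list_prod, List.map_ofFn, ← icoProd_ite_le_eq_icoProd _ c.isLt,
    ofFn_prod_eq_icoProd]
  intro t
  simp only [Function.comp_apply]
  split_ifs <;> simp [substitution_ug]

theorem trLeft_eq : trLeft n g = icoProd (alt (ugExt n g)) 0 (2 * g) :=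
  ofFn_prod_eq_icoProd fun t => by simp [alt, ugExt_coe, Nat.even_iff]

theorem trRight_eq : trRight n g = icoProd (fun t => (alt (ugExt n g) t)⁻¹) 0 (2 * g) :=
  ofFn_prod_eq_icoProd fun t => by split_ifs <;> simp_all [alt, ugExt_coe, Nat.even_iff]

theorem substitution_prod_ug :
    substitution n g (List.ofFn fun t : Fin (2 * g) => ug t).prod = trLeft n g := by
  rw [trLeft_eq, map_list_prod, List.map_ofFn]
  exact ofFn_prod_eq_icoProd fun t => substitution_ug t

theorem substitution_prod_ug_inv :
    substitution n g (List.ofFn fun t : Fin (2 * g) => (ug t)⁻¹).prod = trRight n g := by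
  rw [trRight_eq, map_list_prod, List.map_ofFn]
  exact ofFn_prod_eq_icoProd fun t => by simp [substitution_ug]

theorem surfaceRelations_mRels (h : 0 < n - 1) :
    SurfaceRelations (PresentedGroup.mk (mRels n g) (sg ⟨0, h⟩))
      (PresentedGroup.mk (mRels n g) ∘ ugExt n g) (2 * g) where
  semiconj s c hsc hc := by
    have hr := PresentedGroup.mk_eq_mk_of_mul_inv_mem (rels := mRels n g) <| Or.inr <| Or.inr <|
      Or.inl ⟨h, ⟨s, hsc.trans hc⟩, ⟨c, hc⟩, hsc, rfl⟩
    simp only [map_mul, map_inv] at hr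
    simpa [SemiconjBy, ugExt, hc, hsc.trans hc, mul_assoc] using hr
  commute c hc := by
    have hr := PresentedGroup.mk_eq_mk_of_mul_inv_mem (rels := mRels n g) <| Or.inr <| Or.inr <|
      Or.inr <| Or.inl ⟨h, ⟨c, hc⟩, rfl⟩
    simp only [map_mul, map_inv] at hr
    simpa [Commute, SemiconjBy, ugExt, hc, mul_assoc] using hr

theorem commute_mk_ugExt_mk_sg (c : Fin (2 * g)) {i : Fin (n - 1)} (hi : (i : ℕ) ≠ 0) :
    Commute (PresentedGroup.mk (mRels n g) (ugExt n g c))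
      (PresentedGroup.mk (mRels n g) (sg i)) := by
  have hr := PresentedGroup.mk_eq_mk_of_mul_inv_mem (rels := mRels n g) <| Or.inr <|
    Or.inl ⟨i, c, hi, rfl⟩
  simp only [map_mul] at hr
  rwa [ugExt_coe]

theorem mk_substitution_eq_one {r : FreeGroup (Gens n g)} (hr : r ∈ gmRels n g) :
    PresentedGroup.mk (mRels n g) (substitution n g r) = 1 := by
  rcases hr with hr | ⟨h, c, s, hcs, rfl⟩ | ⟨c, i, hi, rfl⟩ | ⟨h, c, rfl⟩ | rfl
  · rw [substitution_of_mem_braidRels hr]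
    exact PresentedGroup.one_of_mem (Or.inl hr)
  · have hc := (surfaceRelations_mRels h).commute_alt_skipWord_conj (even_two_mul g) s.isLt
      c.isLt (Fin.val_ne_of_ne hcs)
    simp only [map_mul, map_inv, substitution_aWord, substitution_ug, map_alt, map_skipWord]
    rw [hc.eq]
    group
  · have hc := commute_alt_of_commute (b := PresentedGroup.mk (mRels n g) ∘ ugExt n g)
      (commute_mk_ugExt_mk_sg c hi)
    simp only [map_mul, map_inv, substitution_ug, substitution_sg, map_alt]
    rw [hc.eq]
    group
  · simp only [map_mul, map_inv, map_pow, substitution_aWord, substitution_prefixWord,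
      substitution_sg, map_icoProd, map_skipWord, comp_alt]
    rw [(surfaceRelations_mRels h).commutator_icoProd_skipWord_conj (even_two_mul g) c.isLt,
      mul_inv_cancel]
  · simp only [map_mul, map_inv, substitution_prod_ug, substitution_prod_ug_inv,
      substitution_deltaWord]
    exact PresentedGroup.one_of_mem (Or.inr (Or.inr (Or.inr (Or.inr rfl))))

end Presentation

def gmToM (n g : ℕ) : PresentedGroup (gmRels n g) →* PresentedGroup (mRels n g) :=
  PresentedGroup.toGroup (f := PresentedGroup.mk (mRels n g) ∘ substitution n g ∘ FreeGroup.of)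
    fun r hr => by
      rw [show FreeGroup.lift _ = (PresentedGroup.mk (mRels n g)).comp (substitution n g) from
        FreeGroup.ext_hom _ _ fun z => by simp]
      exact mk_substitution_eq_one hr

end SurfaceBraid

theorem gm_to_m_hom_general (n g : ℕ) :
    ∃ φ : PresentedGroup (gmRels n g) →* PresentedGroup (mRels n g),
      (∀ i : Fin (n - 1), φ (PresentedGroup.of (Sum.inl i)) = PresentedGroup.of (Sum.inl i)) ∧
      (∀ j : Fin (2 * g), φ (PresentedGroup.of (Sum.inr j)) =
        if (j : ℕ) % 2 = 0 then PresentedGroup.of (Sum.inr j)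
        else (PresentedGroup.of (Sum.inr j))⁻¹) := by
  refine ⟨SurfaceBraid.gmToM n g, fun i => ?_, fun j => ?_⟩ <;>
    simp only [SurfaceBraid.gmToM, PresentedGroup.toGroup.of, Function.comp_apply,
      SurfaceBraid.substitution, FreeGroup.lift_apply_of, Sum.elim_inl, Sum.elim_inr]
  · rfl
  · split_ifs <;> simp [PresentedGroup.of, ug]

/-- **Comparison of the two presentations of braid groups of closed orientable surfaces.**
There is a group homomorphism `GM(n,g) → M(n,g)` sending `σ_i ↦ σ_i` and sending
`a_j ↦ b_j` for odd (1-based) `j` and `a_j ↦ b_j⁻¹` for even `j`. -/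
theorem gm_to_m_hom (n g : ℕ) (hn : 1 ≤ n) (hg : 1 ≤ g) :
    ∃ φ : PresentedGroup (gmRels n g) →* PresentedGroup (mRels n g),
      (∀ i : Fin (n - 1), φ (PresentedGroup.of (Sum.inl i)) = PresentedGroup.of (Sum.inl i)) ∧
      (∀ j : Fin (2 * g), φ (PresentedGroup.of (Sum.inr j)) =
        if (j : ℕ) % 2 = 0 then PresentedGroup.of (Sum.inr j)
        else (PresentedGroup.of (Sum.inr j))⁻¹) :=
  gm_to_m_hom_general n g
end

section
/- Let n ≥ 1, let E ⊆ T² be an open connected subset, and let f : Fin n → E be injective, giving basepoints in Conf_n(E) and Conf_n(T²). If the homomorphism π₁(Conf_n(E), f) → π₁(Conf_n(T²), f) induced by the inclusion E ↪ T² is surjective, then the homomorphism π₁(E, f(1)) → π₁(T², f(1)) induced by the inclusion is surjective. (This is the key implication in the paper's characterization of when the inclusion-induced map on surface braid groups is surjective.) -/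
open CategoryTheory FundamentalGroupoid

/-- Ordered configuration space. -/
def Conf (n : ℕ) (X : Type) [TopologicalSpace X] : Type :=
  {f : Fin n → X // Function.Injective f}

instance {n : ℕ} {X : Type} [TopologicalSpace X] : TopologicalSpace (Conf n X) :=
  inferInstanceAs (TopologicalSpace {f : Fin n → X // Function.Injective f})

/-- The orbit equivalence relation of the action of the symmetric group on `Conf n X`
by precomposition. -/
def confSetoid (n : ℕ) (X : Type) [TopologicalSpace X] : Setoid (Conf n X) where
  r f g := ∃ e : Equiv.Perm (Fin n), f.1 ∘ e = g.1
  iseqv := by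
    constructor
    · intro f; exact ⟨Equiv.refl _, rfl⟩
    · rintro f g ⟨e, he⟩
      exact ⟨e.symm, by rw [← he]; funext x; simp⟩
    · rintro f g h ⟨e, he⟩ ⟨e', he'⟩
      exact ⟨e'.trans e, by rw [← he', ← he]; funext x; simp⟩

/-- Unordered configuration space. -/
def UConf (n : ℕ) (X : Type) [TopologicalSpace X] : Type :=
  Quotient (confSetoid n X)

instance {n : ℕ} {X : Type} [TopologicalSpace X] : TopologicalSpace (UConf n X) :=
  inferInstanceAs (TopologicalSpace (Quotient (confSetoid n X)))

/-- The homomorphism of fundamental groups induced by a continuous map. -/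
noncomputable def indHom {X Y : Type} [TopologicalSpace X] [TopologicalSpace Y]
    (f : C(X, Y)) (x : X) :
    FundamentalGroup X x →* FundamentalGroup Y (f x) :=
  CategoryTheory.Functor.mapEnd ⟨x⟩ (πₘ (show TopCat.of X ⟶ TopCat.of Y from TopCat.ofHom f))

/-- The torus `(ℝ/ℤ) × (ℝ/ℤ)`. -/
abbrev Torus : Type := AddCircle (1 : ℝ) × AddCircle (1 : ℝ)

/-- The canonical quotient (covering) map `ℝ² → T²`. -/
noncomputable def torusQuot : ℝ × ℝ → Torus := fun x => ((x.1 : AddCircle (1 : ℝ)), (x.2 : AddCircle (1 : ℝ)))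

/-- The open disk `q((0,1) × (0,1))` in the torus. -/
def DTorus : Set Torus := torusQuot '' (Set.Ioo (0 : ℝ) 1 ×ˢ Set.Ioo (0 : ℝ) 1)

/-- The continuous map `Conf n E → Conf n X` induced by the inclusion `E ⊆ X`. -/
def confIncl {n : ℕ} {X : Type} [TopologicalSpace X] (E : Set X) :
    C(Conf n ↥E, Conf n X) where
  toFun c := ⟨fun k => (c.1 k : X), fun i j hij => c.2 (Subtype.val_injective hij)⟩
  continuous_toFun := Continuous.subtype_mk
    (continuous_pi fun k =>
      continuous_subtype_val.comp ((continuous_apply k).comp continuous_subtype_val)) _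

/-- The continuous map `UConf n E → UConf n X` induced by the inclusion `E ⊆ X`. -/
def uconfIncl {n : ℕ} {X : Type} [TopologicalSpace X] (E : Set X) :
    C(UConf n ↥E, UConf n X) where
  toFun := Quotient.map' (confIncl E) (by
    rintro c c' ⟨e, he⟩
    exact ⟨e, by funext k; exact congrArg Subtype.val (congrFun he k)⟩)
  continuous_toFun := Continuous.quotient_map' (confIncl E).continuous _

/-- The continuous evaluation map `Conf n X → X` at the `k`-th strand. -/
def confEval {n : ℕ} {X : Type} [TopologicalSpace X] (k : Fin n) :
    C(Conf n X, X) where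
  toFun c := c.1 k
  continuous_toFun := (continuous_apply k).comp continuous_subtype_val

/-! The torus is a topological group, so a loop `γ` traced by the `k`-th point of a configuration
`b` lifts to a loop of configurations by translating all points rigidly, `j ↦ b j - b k + γ t`.
Hence evaluation at a strand is surjective on `π₁ (Conf n T²)`. Evaluation commutes with the
inclusion `E ⊆ T²`, so surjectivity of `π₁ (Conf n E) → π₁ (Conf n T²)` passes to
`π₁ E → π₁ T²`. -/

lemma indHom_indHom {X Y Z : Type} [TopologicalSpace X] [TopologicalSpace Y]
    [TopologicalSpace Z] (f : C(X, Y)) (g : C(Y, Z)) (x : X) (p : FundamentalGroup X x) :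
    indHom g (f x) (indHom f x p) = indHom (g.comp f) x p := by
  induction p using Quotient.inductionOn
  rfl

def Conf.translateLoop {n : ℕ} {G : Type} [TopologicalSpace G] [AddGroup G]
    [ContinuousAdd G] (b : Conf n G) (k : Fin n) (γ : Path (b.1 k) (b.1 k)) : Path b b where
  toFun t := ⟨fun j => (b.1 j - b.1 k) + γ t,
    fun i j h => b.2 (by rwa [add_left_inj, sub_left_inj] at h)⟩
  continuous_toFun := (continuous_pi fun _ => continuous_const.add γ.continuous).subtype_mk _
  source' := Subtype.ext (funext fun _ => by simp)
  target' := Subtype.ext (funext fun _ => by simp)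

lemma indHom_confEval_surjective {n : ℕ} {G : Type} [TopologicalSpace G] [AddGroup G]
    [ContinuousAdd G] (b : Conf n G) (k : Fin n) :
    Function.Surjective (indHom (confEval k) b) := by
  rintro ⟨γ⟩
  refine ⟨FundamentalGroup.fromPath ⟦b.translateLoop k γ⟧, ?_⟩
  refine congrArg Path.Homotopic.Quotient.mk (Path.ext (funext fun t => ?_))
  show b.1 k - b.1 k + γ t = γ t
  rw [sub_self, zero_add]

theorem pi1_surjective_of_conf_surjective_general (n : ℕ) (hn : 1 ≤ n)
    (E : Set Torus)
    (f : Fin n → ↥E) (hf : Function.Injective f)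
    (hsurj : Function.Surjective (indHom (confIncl E) (⟨f, hf⟩ : Conf n ↥E))) :
    Function.Surjective
      (indHom (⟨Subtype.val, continuous_subtype_val⟩ : C(↥E, Torus)) (f ⟨0, hn⟩)) := by
  intro γ
  set base : Conf n ↥E := ⟨f, hf⟩
  obtain ⟨β, hβ⟩ := (indHom_confEval_surjective (confIncl E base) ⟨0, hn⟩).comp hsurj γ
  refine ⟨indHom (confEval ⟨0, hn⟩) base β, ?_⟩
  -- both routes around the square are the same continuous map `Conf n E → T²`
  exact (indHom_indHom _ _ base β).trans ((indHom_indHom (confIncl E) _ base β).symm.trans hβ)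

/-- **Key implication in the characterization of surjectivity of inclusion-induced maps of
surface braid groups (for the torus):** if, for an open connected subsurface `E ⊆ T²`, the
map `P(n,E) → P(n,T²)` induced by inclusion is surjective, then `π₁(E) → π₁(T²)` is
surjective. -/
theorem pi1_surjective_of_conf_surjective (n : ℕ) (hn : 1 ≤ n)
    (E : Set Torus) (hE : IsOpen E) (hEc : IsConnected E)
    (f : Fin n → ↥E) (hf : Function.Injective f)
    (hsurj : Function.Surjective (indHom (confIncl E) (⟨f, hf⟩ : Conf n ↥E))) :
    Function.Surjective
      (indHom (⟨Subtype.val, continuous_subtype_val⟩ : C(↥E, Torus)) (f ⟨0, hn⟩)) :=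
  pi1_surjective_of_conf_surjective_general n hn E f hf hsurj
end
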